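/- Let G be a D-regular Bonnet-Myers sharp graph of diameter L. Then for every edge x~y, the number of triangles containing the edge x~y is at least 2D/L − 2. -/

import Mathlib

open Finset

namespace BMS

open scoped Classical

variable {V : Type*}

/-- The uniform probability measure on the closed 1-ball of `x` in a `D`-regular graph. -/
noncomputable def mu (G : SimpleGraph V) (D : ℕ) (x : V) : V → ℝ :=
  fun v => if G.dist x v ≤ 1 then 1 / (D + 1) else 0

/-- The L¹-Wasserstein distance between `μ_x` and `μ_y`, as an infimum over transport plans. -/
noncomputable def W1 (G : SimpleGraph V) [Fintype V] (D : ℕ) (x y : V) : ℝ :=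
  sInf { c : ℝ | ∃ π : V → V → ℝ,
    (∀ u v, 0 ≤ π u v) ∧
    (∀ u, ∑ v, π u v = mu G D x u) ∧
    (∀ v, ∑ u, π u v = mu G D y v) ∧
    c = ∑ u, ∑ v, (G.dist u v : ℝ) * π u v }

/-- Ollivier Ricci curvature (Lin–Lu–Yau normalization for regular graphs). -/
noncomputable def kappa (G : SimpleGraph V) [Fintype V] (D : ℕ) (x y : V) : ℝ :=
  ((D + 1) / D) * (1 - W1 G D x y)

/-- `G` is Bonnet–Myers sharp: the infimum of the curvature over edges equals `2 / L`. -/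
def BMSharp (G : SimpleGraph V) [Fintype V] (D L : ℕ) : Prop :=
  sInf { k : ℝ | ∃ x y, G.Adj x y ∧ k = kappa G D x y } = 2 / (L : ℝ)

/-- Number of neighbors of `y` at distance `k` from `x0`. -/
noncomputable def sphDeg (G : SimpleGraph V) [Fintype V] (x0 y : V) (k : ℕ) : ℕ :=
  (Finset.univ.filter (fun v => G.Adj y v ∧ G.dist x0 v = k)).card

/-- Number of triangles containing the edge `x ~ y` (common neighbors of `x` and `y`). -/
noncomputable def tri (G : SimpleGraph V) [Fintype V] (x y : V) : ℕ :=
  (Finset.univ.filter (fun v => G.Adj x v ∧ G.Adj y v)).card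

/-- A good optimal transport map from `B_1(a)` to `B_1(b)`: a bijection between the 1-balls,
fixing exactly the vertices of `B_1(a) ∩ B_1(b)` (among the domain), whose cost realizes
the Wasserstein distance `W1 (μ_a, μ_b)`. -/
def goodMap (G : SimpleGraph V) [Fintype V] (D : ℕ) (a b : V) (T : V → V) : Prop :=
  Set.BijOn T {v | G.dist a v ≤ 1} {v | G.dist b v ≤ 1} ∧
  (∀ v, G.dist a v ≤ 1 → (T v = v ↔ G.dist b v ≤ 1)) ∧
  (1 / (D + 1 : ℝ)) *
      ∑ v ∈ Finset.univ.filter (fun v => G.dist a v ≤ 1), (G.dist v (T v) : ℝ) =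
    W1 G D a b

/-!
Sharpness gives `κ(x, y) ≥ 2 / L` on every edge. Conversely, a transport plan from `μ_x` to
`μ_y` can keep in place at most the mass common to both measures, which lives on
`B₁(x) ∩ B₁(y) ⊆ {x, y} ∪ Δ(x, y)`, and every other unit of mass travels distance at least `1`.
Hence `W₁(μ_x, μ_y) ≥ 1 - (#Δ(x, y) + 2) / (D + 1)`, that is `κ(x, y) ≤ (#Δ(x, y) + 2) / D`,
and comparing the two bounds gives the claim.
-/

lemma dist_le_one_iff {G : SimpleGraph V} (hconn : G.Connected) {x v : V} :
    G.dist x v ≤ 1 ↔ v = x ∨ G.Adj x v := by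
  rw [Nat.le_one_iff_eq_zero_or_eq_one, hconn.dist_eq_zero_iff,
    SimpleGraph.dist_eq_one_iff_adj, eq_comm]

lemma mu_nonneg (G : SimpleGraph V) (D : ℕ) (x v : V) : 0 ≤ mu G D x v := by
  unfold mu; positivity

section

variable [Fintype V] {G : SimpleGraph V} {D : ℕ}

lemma card_filter_dist_le_one (hconn : G.Connected) (hreg : G.IsRegularOfDegree D) (x : V) :
    #{v | G.dist x v ≤ 1} = D + 1 := by
  have hball : ({v | G.dist x v ≤ 1} : Finset V) = insert x (G.neighborFinset x) := by
    ext v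
    simp only [mem_filter, mem_univ, true_and, mem_insert, SimpleGraph.mem_neighborFinset,
      dist_le_one_iff hconn]
  rw [hball, card_insert_of_notMem (by simp), G.card_neighborFinset_eq_degree, hreg x]

lemma sum_mu (hconn : G.Connected) (hreg : G.IsRegularOfDegree D) (x : V) :
    ∑ v, mu G D x v = 1 := by
  unfold mu
  rw [← sum_filter, sum_const, card_filter_dist_le_one hconn hreg x, nsmul_eq_mul]
  push_cast
  field_simp

def transportCosts (G : SimpleGraph V) (D : ℕ) (x y : V) : Set ℝ :=
  { c : ℝ | ∃ π : V → V → ℝ,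
    (∀ u v, 0 ≤ π u v) ∧
    (∀ u, ∑ v, π u v = mu G D x u) ∧
    (∀ v, ∑ u, π u v = mu G D y v) ∧
    c = ∑ u, ∑ v, (G.dist u v : ℝ) * π u v }

lemma W1_eq_sInf_transportCosts (x y : V) : W1 G D x y = sInf (transportCosts G D x y) := rfl

lemma transportCosts_nonempty (hconn : G.Connected) (hreg : G.IsRegularOfDegree D) (x y : V) :
    (transportCosts G D x y).Nonempty :=
  ⟨_, fun u v => mu G D x u * mu G D y v,
    fun u v => mul_nonneg (mu_nonneg _ _ _ _) (mu_nonneg _ _ _ _),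
    fun u => by rw [← mul_sum, sum_mu hconn hreg, mul_one],
    fun v => by rw [← sum_mul, sum_mu hconn hreg, one_mul], rfl⟩

lemma sum_sub_sum_diag_le_cost (hconn : G.Connected) {π : V → V → ℝ}
    (hπ : ∀ u v, 0 ≤ π u v) :
    ∑ u, ∑ v, π u v - ∑ u, π u u ≤ ∑ u, ∑ v, (G.dist u v : ℝ) * π u v := by
  have hdiag : ∑ u, π u u = ∑ u, ∑ v, if u = v then π u v else 0 := by
    simp only [sum_ite_eq, mem_univ, if_true]
  rw [hdiag, ← sum_sub_distrib]
  refine sum_le_sum fun u _ => ?_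
  rw [← sum_sub_distrib]
  refine sum_le_sum fun v _ => ?_
  split_ifs with huv
  · subst huv
    simp
  · have hdist : (1 : ℝ) ≤ G.dist u v := by exact_mod_cast hconn.pos_dist_of_ne huv
    nlinarith [hπ u v]

lemma diag_le_min_mu {x y : V} {π : V → V → ℝ} (hπ : ∀ u v, 0 ≤ π u v)
    (hx : ∀ u, ∑ v, π u v = mu G D x u) (hy : ∀ v, ∑ u, π u v = mu G D y v) (u : V) :
    π u u ≤ min (mu G D x u) (mu G D y u) :=
  le_min (hx u ▸ single_le_sum (fun v _ => hπ u v) (mem_univ u))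
    (hy u ▸ single_le_sum (fun v _ => hπ v u) (mem_univ u))

lemma sum_min_mu (x y : V) :
    ∑ u, min (mu G D x u) (mu G D y u) =
      #{u | G.dist x u ≤ 1 ∧ G.dist y u ≤ 1} / (D + 1 : ℝ) := by
  have hmin : ∀ u, min (mu G D x u) (mu G D y u) =
      if G.dist x u ≤ 1 ∧ G.dist y u ≤ 1 then 1 / (D + 1 : ℝ) else 0 := by
    intro u
    unfold mu
    split_ifs <;> simp_all [add_nonneg]
  simp only [hmin, ← sum_filter, sum_const, nsmul_eq_mul]
  ring

lemma one_sub_card_div_le_W1 (hconn : G.Connected) (hreg : G.IsRegularOfDegree D) (x y : V) :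
    1 - #{u | G.dist x u ≤ 1 ∧ G.dist y u ≤ 1} / (D + 1 : ℝ) ≤ W1 G D x y := by
  rw [W1_eq_sInf_transportCosts, ← sum_min_mu]
  refine le_csInf (transportCosts_nonempty hconn hreg x y) ?_
  rintro _ ⟨π, hπ, hx, hy, rfl⟩
  have hmass : ∑ u, ∑ v, π u v = 1 := by simp only [hx, sum_mu hconn hreg]
  have hkept : ∑ u, π u u ≤ ∑ u, min (mu G D x u) (mu G D y u) :=
    sum_le_sum fun u _ => diag_le_min_mu hπ hx hy u
  linarith [sum_sub_sum_diag_le_cost hconn hπ]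

lemma card_common_ball_le_tri_add_two (hconn : G.Connected) (x y : V) :
    #{u | G.dist x u ≤ 1 ∧ G.dist y u ≤ 1} ≤ tri G x y + 2 := by
  have hsub : ({u | G.dist x u ≤ 1 ∧ G.dist y u ≤ 1} : Finset V) ⊆
      insert x (insert y ({v | G.Adj x v ∧ G.Adj y v} : Finset V)) := by
    intro u hu
    simp only [mem_filter, mem_univ, true_and, dist_le_one_iff hconn] at hu
    simp only [mem_insert, mem_filter, mem_univ, true_and]
    tauto
  calc _ ≤ _ := card_le_card hsub
    _ ≤ #(insert y ({v | G.Adj x v ∧ G.Adj y v} : Finset V)) + 1 := card_insert_le _ _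
    _ ≤ tri G x y + 2 := by
      have := card_insert_le y ({v | G.Adj x v ∧ G.Adj y v} : Finset V)
      unfold tri
      omega

lemma kappa_le_tri_add_two_div (hconn : G.Connected) (hreg : G.IsRegularOfDegree D) (x y : V) :
    kappa G D x y ≤ (tri G x y + 2) / D := by
  have hcard : (#{u | G.dist x u ≤ 1 ∧ G.dist y u ≤ 1} : ℝ) ≤ tri G x y + 2 := by
    exact_mod_cast card_common_ball_le_tri_add_two hconn x y
  have hW1 : 1 - W1 G D x y ≤ (tri G x y + 2) / (D + 1) :=
    calc 1 - W1 G D x y ≤ #{u | G.dist x u ≤ 1 ∧ G.dist y u ≤ 1} / (D + 1 : ℝ) := by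
          linarith [one_sub_card_div_le_W1 hconn hreg x y]
      _ ≤ (tri G x y + 2) / (D + 1) := by gcongr
  calc kappa G D x y ≤ (D + 1) / D * ((tri G x y + 2) / (D + 1)) :=
        mul_le_mul_of_nonneg_left hW1 (by positivity)
    _ = (tri G x y + 2) / D := by
        rw [mul_comm, div_mul_div_cancel₀ (by positivity)]

lemma two_div_le_kappa_of_BMSharp {L : ℕ} (hBM : BMSharp G D L) {x y : V} (hxy : G.Adj x y) :
    2 / (L : ℝ) ≤ kappa G D x y := by
  have hfin : { k : ℝ | ∃ a b, G.Adj a b ∧ k = kappa G D a b }.Finite :=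
    (Set.finite_range fun p : V × V => kappa G D p.1 p.2).subset
      fun _ ⟨a, b, _, hk⟩ => ⟨(a, b), hk.symm⟩
  exact hBM ▸ csInf_le hfin.bddBelow ⟨x, y, hxy, rfl⟩

end

theorem stmt_general [Fintype V] (G : SimpleGraph V) (hconn : G.Connected)
    (D L : ℕ) (hreg : G.IsRegularOfDegree D) (hBM : BMSharp G D L) :
    ∀ x y : V, G.Adj x y → 2 * (D : ℝ) / L - 2 ≤ (tri G x y : ℝ) := by
  intro x y hxy
  have hbound : 2 / (L : ℝ) ≤ (tri G x y + 2) / D :=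
    (two_div_le_kappa_of_BMSharp hBM hxy).trans (kappa_le_tri_add_two_div hconn hreg x y)
  have hcancel : (D : ℝ) * ((tri G x y + 2) / D) ≤ tri G x y + 2 := by
    rcases eq_or_ne (D : ℝ) 0 with hD | hD
    · rw [hD, zero_mul]; positivity
    · rw [mul_div_cancel₀ _ hD]
  calc 2 * (D : ℝ) / L - 2 = D * (2 / L) - 2 := by ring
    _ ≤ D * ((tri G x y + 2) / D) - 2 := by gcongr
    _ ≤ tri G x y := by linarith

theorem stmt [Fintype V] (G : SimpleGraph V) (hconn : G.Connected)
    (D L : ℕ) (hD : 0 < D) (hL : 0 < L) (hreg : G.IsRegularOfDegree D)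
    (hdiam : G.diam = L) (hBM : BMSharp G D L) :
    ∀ x y : V, G.Adj x y → 2 * (D : ℝ) / L - 2 ≤ (tri G x y : ℝ) :=
  stmt_general G hconn D L hreg hBM

end BMS
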